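/- Uniform Lipschitz estimate for the nonlinearity (Lemma 3.8): for every R > 0 there exists a constant L > 0, independent of δ, such that for every δ ∈ (0, κ₀/R], every t ∈ (0,δ], and all u, v ∈ Y with ‖u‖ ≤ R t² and ‖v‖ ≤ R t², one has ‖f(t,u) − f(t,v)‖ ≤ L‖u − v‖. -/

import Mathlib

noncomputable section

/-- `ℝ^d` as Euclidean space. -/
abbrev Euc (d : ℕ) : Type := EuclideanSpace ℝ (Fin d)

/-- Generalized binomial coefficient `binom(α,k) = (∏_{i=0}^{k−1}(α−i))/k!`. -/
noncomputable def rbinom (α : ℝ) (k : ℕ) : ℝ :=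
  (∏ i ∈ Finset.range k, (α - i)) / (Nat.factorial k : ℝ)

/-- The singular nonlinearity `f(t,u)`, defined pointwise by
`f(t,u)(y) = t a(y) + t^p λ(y) − (η(y)/β) Σ_{k≥2} binom(β+1,k)(u(y)/(tη(y)))^k`
`+ θ[t^p γ(y)(tη(y)+u(y))/((t^p γ(y))^β + |tη(y)+u(y)|^β)^{1/β} − (tη(y)+u(y))]`,
with `β = 1/(p−1)` and `1/β = p−1`; by Lean's conventions quotients with vanishing
denominator are read as `0`. -/
noncomputable def fNL {d : ℕ} (p θ : ℝ) (η γ lam a : Euc d → ℝ)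
    (t : ℝ) (u : Euc d → ℝ) (y : Euc d) : ℝ :=
  t * a y + t ^ p * lam y
    - (η y / (1 / (p - 1))) *
        ∑' k : ℕ, rbinom (1 / (p - 1) + 1) (k + 2) * (u y / (t * η y)) ^ (k + 2)
    + θ * (t ^ p * γ y * (t * η y + u y) /
          ((t ^ p * γ y) ^ (1 / (p - 1)) + |t * η y + u y| ^ (1 / (p - 1))) ^ (p - 1)
        - (t * η y + u y))

/-! With `s = u / (t η)`, the difference `f(t,u) − f(t,v)` splits into `(η/β)` times a difference
of the power series `Σ_{k≥2} binom(β+1,k) s^k`, and `θ` times a difference of `G(x) − x` at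
`x = tη + u` and `x = tη + v`, where `G(x) = A x / (A^β + |x|^β)^{1/β}` with `A = t^p γ ≥ 0`.

Since `‖u‖ ≤ R t²` and `t ≤ κ₀/R`, we get `|s| ≤ R t / κ₀ ≤ 1`, and on `[-m, m]` with `m ≤ 1` the
series is Lipschitz with constant `m Σ k |binom(β+1,k)|`. The sum is finite because
`k binom(β+1,k) = (β+1) binom(β,k−1)` and `Σ |binom(β,k)| < ∞` for `β > 0`. The factor
`m = R t / κ₀` cancels the `1/t` in `ds/du = 1/(t η)`, which is why `L` does not depend on `δ`.

`G` and `x ↦ x − G(x)` are both nondecreasing (they are odd, and on `[0, ∞)` the second one is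
`x (1 − A / (A^β + x^β)^{1/β})`), so `x ↦ G(x) − x` is 1-Lipschitz.
-/

lemma rbinom_succ (α : ℝ) (n : ℕ) :
    rbinom α (n + 1) = rbinom α n * ((α - n) / (n + 1)) := by
  unfold rbinom
  rw [Finset.prod_range_succ, Nat.factorial_succ]
  push_cast
  rw [div_mul_div_comm, mul_comm ((n : ℝ) + 1)]

lemma succ_mul_rbinom_succ (α : ℝ) (n : ℕ) :
    ((n : ℝ) + 1) * rbinom (α + 1) (n + 1) = (α + 1) * rbinom α n := by
  unfold rbinom
  rw [Finset.prod_range_succ', Nat.factorial_succ]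
  have hshift : ∀ i ∈ Finset.range n, α + 1 - ((i + 1 : ℕ) : ℝ) = α - i := by
    intro i _
    push_cast
    ring
  rw [Finset.prod_congr rfl hshift]
  push_cast
  field_simp
  ring

lemma summable_of_le_sub_succ {g F : ℕ → ℝ} (hg : ∀ n, 0 ≤ g n) (hF : ∀ n, 0 ≤ F n)
    (hgF : ∀ n, g n ≤ F n - F (n + 1)) : Summable g := by
  refine summable_of_sum_range_le hg (c := F 0) fun N => ?_
  calc ∑ i ∈ Finset.range N, g i ≤ ∑ i ∈ Finset.range N, (F i - F (i + 1)) :=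
        Finset.sum_le_sum fun i _ => hgF i
    _ = F 0 - F N := Finset.sum_range_sub' F N
    _ ≤ F 0 := sub_le_self _ (hF N)

lemma summable_abs_rbinom {β : ℝ} (hβ : 0 < β) : Summable fun n => |rbinom β n| := by
  obtain ⟨K, hK⟩ := exists_nat_ge β
  -- for `n ≥ β`, `(n + 1) |b (n + 1)| = (n - β) |b n|`, so `β |b n|` telescopes
  have htel : ∀ n, K ≤ n →
      β * |rbinom β n| = n * |rbinom β n| - (n + 1) * |rbinom β (n + 1)| := by
    intro n hn
    have hnβ : β ≤ n := hK.trans (by exact_mod_cast hn)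
    rw [rbinom_succ, abs_mul, abs_div, abs_sub_comm, abs_of_nonneg (sub_nonneg.2 hnβ),
      abs_of_pos (by positivity : (0 : ℝ) < n + 1)]
    field_simp
    ring
  have htail : Summable fun n => |rbinom β (n + K)| := by
    refine summable_of_le_sub_succ (F := fun n : ℕ => ((n + K : ℕ) : ℝ) * |rbinom β (n + K)| / β)
      (fun n => abs_nonneg _) (fun n => by positivity) fun n => ?_
    rw [← sub_div, le_div_iff₀ hβ, mul_comm, htel (n + K) (Nat.le_add_left K n),
      Nat.add_right_comm n 1 K]
    push_cast
    exact le_rfl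
  exact (summable_nat_add_iff K).mp htail

lemma summable_natCast_mul_abs_rbinom {α : ℝ} (hα : 0 < α) :
    Summable fun n : ℕ => (n : ℝ) * |rbinom (α + 1) n| := by
  refine (summable_nat_add_iff 1).mp (((summable_abs_rbinom hα).mul_left (α + 1)).congr
    fun n => ?_)
  have h := congrArg abs (succ_mul_rbinom_succ α n)
  rw [abs_mul, abs_mul, abs_of_pos (by positivity : (0 : ℝ) < n + 1),
    abs_of_pos (by positivity : (0 : ℝ) < α + 1)] at h
  push_cast
  exact h.symm

lemma abs_tsum_mul_pow_sub_le {c : ℕ → ℝ} (hc : Summable fun k : ℕ => ((k : ℝ) + 2) * |c k|)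
    {m s r : ℝ} (hm : m ≤ 1) (hs : |s| ≤ m) (hr : |r| ≤ m) :
    |∑' k, c k * s ^ (k + 2) - ∑' k, c k * r ^ (k + 2)| ≤
      (∑' k : ℕ, ((k : ℝ) + 2) * |c k|) * (m * |s - r|) := by
  have hm0 : 0 ≤ m := (abs_nonneg s).trans hs
  have hsummable : ∀ x : ℝ, |x| ≤ m → Summable fun k : ℕ => c k * x ^ (k + 2) := fun x hx =>
    hc.of_norm_bounded fun k => by
      rw [Real.norm_eq_abs, abs_mul, abs_pow]
      calc |c k| * |x| ^ (k + 2) ≤ 1 * |c k| := by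
            rw [mul_comm]
            gcongr
            exact pow_le_one₀ (abs_nonneg x) (hx.trans hm)
        _ ≤ ((k : ℝ) + 2) * |c k| := by gcongr; linarith [k.cast_nonneg (α := ℝ)]
  have hterm : ∀ k, ‖c k * s ^ (k + 2) - c k * r ^ (k + 2)‖ ≤
      ((k : ℝ) + 2) * |c k| * (m * |s - r|) := fun k => by
    have hmax : max |s| |r| ^ (k + 1) ≤ m :=
      (pow_le_pow_left₀ ((abs_nonneg s).trans (le_max_left _ _)) (max_le hs hr) _).trans
        (pow_le_of_le_one hm0 hm k.succ_ne_zero)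
    calc ‖c k * s ^ (k + 2) - c k * r ^ (k + 2)‖ = |c k| * |s ^ (k + 2) - r ^ (k + 2)| := by
          rw [Real.norm_eq_abs, ← mul_sub, abs_mul]
      _ ≤ |c k| * (|s - r| * (k + 2 : ℕ) * max |s| |r| ^ (k + 1)) := by
          gcongr
          exact abs_pow_sub_pow_le s r (k + 2)
      _ ≤ |c k| * (|s - r| * (k + 2 : ℕ) * m) := by gcongr
      _ = ((k : ℝ) + 2) * |c k| * (m * |s - r|) := by push_cast; ring
  rw [← (hsummable s hs).tsum_sub (hsummable r hr), ← tsum_mul_right]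
  exact tsum_of_norm_bounded (hc.mul_right _).hasSum hterm

lemma abs_div_mul_le {x b t κ e : ℝ} (ht : 0 < t) (hκ : 0 < κ) (he : κ ≤ e) (hx : |x| ≤ b) :
    |x / (t * e)| ≤ b / (t * κ) := by
  rw [abs_div, abs_of_pos (mul_pos ht (hκ.trans_le he))]
  exact div_le_div₀ ((abs_nonneg x).trans hx) hx (by positivity) (by gcongr)

/-- The Taylor remainder of `(1 + s)^α` after its linear part. -/
def binomTail (α s : ℝ) : ℝ := ∑' k : ℕ, rbinom α (k + 2) * s ^ (k + 2)

lemma abs_binomTail_sub_le {α m s r : ℝ} (hα : 0 < α) (hm : m ≤ 1) (hs : |s| ≤ m)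
    (hr : |r| ≤ m) :
    |binomTail (α + 1) s - binomTail (α + 1) r| ≤
      (∑' k : ℕ, ((k : ℝ) + 2) * |rbinom (α + 1) (k + 2)|) * (m * |s - r|) := by
  have hc := (summable_nat_add_iff 2).mpr (summable_natCast_mul_abs_rbinom hα)
  push_cast at hc
  exact abs_tsum_mul_pow_sub_le hc hm hs hr

def saturate (A B q x : ℝ) : ℝ := A * x / (A ^ B + |x| ^ B) ^ q

section Saturate

variable {A B q : ℝ}

lemma saturate_neg (x : ℝ) : saturate A B q (-x) = -saturate A B q x := by
  simp [saturate, neg_div]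

lemma le_rpow_add_abs_rpow_rpow (hA : 0 ≤ A) (hB : 0 < B) (hqB : q * B = 1) (x : ℝ) :
    A ≤ (A ^ B + |x| ^ B) ^ q := by
  have hq : 0 ≤ q := nonneg_of_mul_nonneg_left (hqB ▸ zero_le_one) hB
  calc A = (A ^ B) ^ q := by rw [← Real.rpow_mul hA, mul_comm, hqB, Real.rpow_one]
    _ ≤ (A ^ B + |x| ^ B) ^ q := by gcongr; exact le_add_of_nonneg_right (by positivity)

lemma monotoneOn_saturate (hA : 0 < A) (hB : 0 < B) (hqB : q * B = 1) :
    MonotoneOn (saturate A B q) (Set.Ici 0) := by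
  intro z (hz : 0 ≤ z) w (hw : 0 ≤ w) hzw
  have hbase : ∀ x : ℝ, 0 < A ^ B + |x| ^ B := fun x => by positivity
  have hD : ∀ x : ℝ, 0 < (A ^ B + |x| ^ B) ^ q := fun x => Real.rpow_pos_of_pos (hbase x) q
  have hpow : ∀ x : ℝ, ((A ^ B + |x| ^ B) ^ q) ^ B = A ^ B + |x| ^ B := fun x => by
    rw [← Real.rpow_mul (hbase x).le, hqB, Real.rpow_one]
  unfold saturate
  rw [div_le_div_iff₀ (hD z) (hD w), mul_assoc, mul_assoc,
    mul_le_mul_iff_right₀ hA,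
    ← Real.rpow_le_rpow_iff (mul_nonneg hz (hD w).le) (mul_nonneg hw (hD z).le) hB,
    Real.mul_rpow hz (hD w).le, Real.mul_rpow hw (hD z).le, hpow, hpow,
    abs_of_nonneg hz, abs_of_nonneg hw]
  have hzw' : z ^ B * A ^ B ≤ w ^ B * A ^ B := by gcongr
  nlinarith

lemma monotoneOn_sub_saturate (hA : 0 < A) (hB : 0 < B) (hqB : q * B = 1) :
    MonotoneOn (fun x => x - saturate A B q x) (Set.Ici 0) := by
  intro z (hz : 0 ≤ z) w (hw : 0 ≤ w) hzw
  have hD : ∀ x : ℝ, 0 < (A ^ B + |x| ^ B) ^ q := fun x =>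
    hA.trans_le (le_rpow_add_abs_rpow_rpow hA.le hB hqB x)
  have hfactor : ∀ x, x - saturate A B q x = x * (1 - A / (A ^ B + |x| ^ B) ^ q) := fun x => by
    unfold saturate
    field_simp [(hD x).ne']
  have hDmono : (A ^ B + |z| ^ B) ^ q ≤ (A ^ B + |w| ^ B) ^ q := by
    have hq : 0 ≤ q := nonneg_of_mul_nonneg_left (hqB ▸ zero_le_one) hB
    rw [abs_of_nonneg hz, abs_of_nonneg hw]
    gcongr
  simp only [hfactor]
  refine mul_le_mul hzw ?_ ?_ hw
  · gcongr
  · rw [sub_nonneg, div_le_one (hD z)]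
    exact le_rpow_add_abs_rpow_rpow hA.le hB hqB z

end Saturate

lemma abs_sub_sub_le_of_monotone {f : ℝ → ℝ} (hf : Monotone f)
    (hg : Monotone fun x => x - f x) (x y : ℝ) : |(f x - x) - (f y - y)| ≤ |x - y| := by
  wlog hxy : x ≤ y generalizing x y
  · rw [abs_sub_comm, abs_sub_comm x]
    exact this y x (le_of_not_ge hxy)
  have h₁ := hf hxy
  have h₂ : x - f x ≤ y - f y := hg hxy
  rw [abs_sub_comm x, abs_of_nonneg (sub_nonneg.2 hxy), abs_le]
  constructor <;> linarith

lemma abs_saturate_sub_sub_le {A B q : ℝ} (hA : 0 ≤ A) (hB : 0 < B) (hqB : q * B = 1)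
    (x y : ℝ) : |(saturate A B q x - x) - (saturate A B q y - y)| ≤ |x - y| := by
  rcases hA.eq_or_lt with rfl | hA
  · simp only [saturate, zero_mul, zero_div, zero_sub]
    rw [neg_sub_neg, abs_sub_comm]
  refine abs_sub_sub_le_of_monotone
    (monotone_of_odd_of_monotoneOn_nonneg saturate_neg (monotoneOn_saturate hA hB hqB))
    (monotone_of_odd_of_monotoneOn_nonneg (fun x => ?_) (monotoneOn_sub_saturate hA hB hqB)) x y
  simp only [saturate_neg]
  abel

section Nonlinearity

variable {d : ℕ} {p θ t : ℝ} {η γ lam a u v : Euc d → ℝ} {y : Euc d}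

lemma fNL_sub_fNL :
    fNL p θ η γ lam a t u y - fNL p θ η γ lam a t v y =
      -(η y / (1 / (p - 1)) * (binomTail (1 / (p - 1) + 1) (u y / (t * η y)) -
          binomTail (1 / (p - 1) + 1) (v y / (t * η y)))) +
        θ * ((saturate (t ^ p * γ y) (1 / (p - 1)) (p - 1) (t * η y + u y) - (t * η y + u y)) -
          (saturate (t ^ p * γ y) (1 / (p - 1)) (p - 1) (t * η y + v y) - (t * η y + v y))) := by
  simp only [fNL, binomTail, saturate]
  ring

lemma abs_fNL_sub_fNL_le {m : ℝ} (hp : 1 < p) (hθ : 0 ≤ θ) (ht : 0 < t) (hη : 0 < η y)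
    (hγ : 0 ≤ γ y) (hm : m ≤ 1) (hu : |u y / (t * η y)| ≤ m) (hv : |v y / (t * η y)| ≤ m) :
    |fNL p θ η γ lam a t u y - fNL p θ η γ lam a t v y| ≤
      η y * (p - 1) * (∑' k : ℕ, ((k : ℝ) + 2) * |rbinom (1 / (p - 1) + 1) (k + 2)|) *
          (m * |u y / (t * η y) - v y / (t * η y)|) + θ * |u y - v y| := by
  have hp₁ : 0 < p - 1 := sub_pos.2 hp
  have hβ : 0 < 1 / (p - 1) := one_div_pos.2 hp₁
  have hseries := abs_binomTail_sub_le hβ hm hu hv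
  have hsat := abs_saturate_sub_sub_le (A := t ^ p * γ y) (by positivity) hβ
    (mul_one_div_cancel hp₁.ne') (t * η y + u y) (t * η y + v y)
  rw [add_sub_add_left_eq_sub] at hsat
  rw [fNL_sub_fNL]
  refine (abs_add_le _ _).trans ?_
  rw [abs_neg, abs_mul, abs_mul, abs_of_nonneg hθ, div_div_eq_mul_div, div_one,
    abs_of_pos (by positivity), mul_assoc (η y * (p - 1))]
  gcongr

end Nonlinearity

theorem nonlinearity_uniform_lipschitz_general
    (d : ℕ) (p θ κ₀ : ℝ) (hp : 1 < p) (hθ : 0 ≤ θ) (hκ₀ : 0 < κ₀)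
    (η γ lam a : Euc d → ℝ)
    (hηb : ∃ C, ∀ y, |η y| ≤ C)
    (hηκ : ∀ y, κ₀ ≤ η y) (hγ0 : ∀ y, 0 ≤ γ y)
    (R : ℝ) (hR : 0 < R) :
    ∃ L > (0 : ℝ), ∀ δ : ℝ, 0 < δ → δ ≤ κ₀ / R → ∀ t ∈ Set.Ioc (0 : ℝ) δ,
      ∀ u v : Euc d → ℝ, Continuous u → Continuous v →
        (∀ y, |u y| ≤ R * t ^ 2) → (∀ y, |v y| ≤ R * t ^ 2) →
        ∀ c : ℝ, (∀ y, |u y - v y| ≤ c) →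
        ∀ y, |fNL p θ η γ lam a t u y - fNL p θ η γ lam a t v y| ≤ L * c := by
  obtain ⟨Cη, hCη⟩ := hηb
  set T := ∑' k : ℕ, ((k : ℝ) + 2) * |rbinom (1 / (p - 1) + 1) (k + 2)|
  have hT : 0 ≤ T := tsum_nonneg fun k => by positivity
  have hCη₀ : 0 ≤ Cη := (abs_nonneg _).trans (hCη 0)
  have hp₁ : 0 ≤ p - 1 := by linarith
  refine ⟨Cη * (p - 1) * T * R / κ₀ ^ 2 + θ + 1, by positivity, ?_⟩
  intro δ _ hδ t ⟨ht, htδ⟩ u v _ _ hu hv c hc y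
  have hη := hηκ y
  have hm : R * t ^ 2 / (t * κ₀) ≤ 1 := by
    rw [div_le_one (by positivity), pow_two, ← mul_assoc, mul_comm t κ₀]
    gcongr
    calc R * t ≤ R * δ := by gcongr
      _ ≤ κ₀ := (le_div_iff₀' hR).1 hδ
  have hdiff : |u y / (t * η y) - v y / (t * η y)| ≤ c / (t * κ₀) := by
    rw [← sub_div]
    exact abs_div_mul_le ht hκ₀ hη (hc y)
  calc _ ≤ η y * (p - 1) * T * (R * t ^ 2 / (t * κ₀) * |u y / (t * η y) - v y / (t * η y)|)
          + θ * |u y - v y| :=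
        abs_fNL_sub_fNL_le hp hθ ht (hκ₀.trans_le hη) (hγ0 y) hm
          (abs_div_mul_le ht hκ₀ hη (hu y)) (abs_div_mul_le ht hκ₀ hη (hv y))
    _ ≤ Cη * (p - 1) * T * (R * t ^ 2 / (t * κ₀) * (c / (t * κ₀))) + θ * c := by
        gcongr
        · exact (le_abs_self _).trans (hCη y)
        · exact hc y
    _ = (Cη * (p - 1) * T * R / κ₀ ^ 2 + θ) * c := by
        field_simp
    _ ≤ (Cη * (p - 1) * T * R / κ₀ ^ 2 + θ + 1) * c :=
        mul_le_mul_of_nonneg_right (by linarith) ((abs_nonneg _).trans (hc y))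

/-- Lemma 3.8: for every `R > 0` there is `L > 0`, independent of `δ`,
such that for every `δ ∈ (0, κ₀/R]`, every `t ∈ (0,δ]` and all `u, v ∈ Y` with
`‖u‖ ≤ R t²` and `‖v‖ ≤ R t²`, one has `‖f(t,u) − f(t,v)‖ ≤ L ‖u − v‖` (expressed via an
arbitrary uniform bound `c` on `|u − v|`). -/
theorem nonlinearity_uniform_lipschitz
    (d : ℕ) (hd : 1 ≤ d) (p θ κ₀ : ℝ) (hp : 1 < p) (hθ : 0 ≤ θ) (hκ₀ : 0 < κ₀)
    (η γ lam a : Euc d → ℝ)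
    (hηc : Continuous η) (hγc : Continuous γ) (hlamc : Continuous lam) (hac : Continuous a)
    (hηb : ∃ C, ∀ y, |η y| ≤ C) (hγb : ∃ C, ∀ y, |γ y| ≤ C)
    (hlamb : ∃ C, ∀ y, |lam y| ≤ C) (hab : ∃ C, ∀ y, |a y| ≤ C)
    (hηκ : ∀ y, κ₀ ≤ η y) (hγ0 : ∀ y, 0 ≤ γ y) (hlam0 : ∀ y, 0 ≤ lam y)
    (R : ℝ) (hR : 0 < R) :
    ∃ L > (0 : ℝ), ∀ δ : ℝ, 0 < δ → δ ≤ κ₀ / R → ∀ t ∈ Set.Ioc (0 : ℝ) δ,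
      ∀ u v : Euc d → ℝ, Continuous u → Continuous v →
        (∀ y, |u y| ≤ R * t ^ 2) → (∀ y, |v y| ≤ R * t ^ 2) →
        ∀ c : ℝ, (∀ y, |u y - v y| ≤ c) →
        ∀ y, |fNL p θ η γ lam a t u y - fNL p θ η γ lam a t v y| ≤ L * c :=
  nonlinearity_uniform_lipschitz_general d p θ κ₀ hp hθ hκ₀ η γ lam a hηb hηκ hγ0 R hR
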